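/- Let G be a subgraph of the complete bipartite graph K_{7,30} with parts X (of size 7) and Y (of size 30) such that G contains no copy of K_{2,2}. If the maximum degree over the vertices of X equals 9, then the bipartite complement of G contains a copy of K_{5,5}. -/

import Mathlib

/-! Let `x₀ ∈ X` have degree `9`. Since `G` has no `K_{2,2}`, distinct `Y`-vertices with two
neighbours have distinct pairs of neighbours; the `21` vertices outside `N(x₀)` have all their
neighbours among the `6` other `X`-vertices, and `21 > 15 = (6 choose 2)`, so one of them, `y₀`,
has at most one neighbour. Choose five `X`-vertices `A` avoiding `x₀` and the neighbours of `y₀`.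
Each of them has at most one neighbour in `N(x₀)`, so at least `9 - 5 = 4` vertices of `N(x₀)`
have no neighbour in `A`; together with `y₀` they span a `K_{5,5}` with `A` in the complement. -/

/-- A subgraph of the complete bipartite graph `K_{m,n}` is identified with its
edge set, a finset of pairs `(x, y)` with `x` in the part `X = Fin m` and
`y` in the part `Y = Fin n`.  `bContains s t E` says that the bipartite graph
with edge set `E` contains a copy of `K_{s,t}`: there are `s` distinct
vertices of `X` and `t` distinct vertices of `Y` with all pairs present. -/
def bContains {m n : ℕ} (s t : ℕ) (E : Finset (Fin m × Fin n)) : Prop :=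
  ∃ (A : Finset (Fin m)) (B : Finset (Fin n)),
    A.card = s ∧ B.card = t ∧ ∀ x ∈ A, ∀ y ∈ B, (x, y) ∈ E

/-- The bipartite complement: edge set `(X × Y) \ E`. -/
def bCompl {m n : ℕ} (E : Finset (Fin m × Fin n)) : Finset (Fin m × Fin n) :=
  Finset.univ \ E

/-- The neighborhood `N_G(x) ⊆ Y` of a vertex `x ∈ X`. -/
def bNbhd {m n : ℕ} (E : Finset (Fin m × Fin n)) (x : Fin m) : Finset (Fin n) :=
  Finset.univ.filter (fun y => (x, y) ∈ E)

/-- The degree of a vertex `x ∈ X`. -/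
def bDeg {m n : ℕ} (E : Finset (Fin m × Fin n)) (x : Fin m) : ℕ :=
  (bNbhd E x).card

/-- `Δ(G_X)`: the maximum degree over the vertices of the part `X`. -/
def bMaxDegX {m n : ℕ} (E : Finset (Fin m × Fin n)) : ℕ :=
  Finset.univ.sup (fun x => bDeg E x)

open Finset

section

variable {m n : ℕ} {E : Finset (Fin m × Fin n)}

def bNbhdY (E : Finset (Fin m × Fin n)) (y : Fin n) : Finset (Fin m) :=
  univ.filter (fun x => (x, y) ∈ E)

def bCommonNonNbhd (E : Finset (Fin m × Fin n)) (A : Finset (Fin m)) : Finset (Fin n) :=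
  univ.filter (fun y => Disjoint A (bNbhdY E y))

@[simp]
lemma mem_bNbhd {x : Fin m} {y : Fin n} : y ∈ bNbhd E x ↔ (x, y) ∈ E := by
  simp [bNbhd]

@[simp]
lemma mem_bNbhdY {x : Fin m} {y : Fin n} : x ∈ bNbhdY E y ↔ (x, y) ∈ E := by
  simp [bNbhdY]

@[simp]
lemma mem_bCommonNonNbhd {A : Finset (Fin m)} {y : Fin n} :
    y ∈ bCommonNonNbhd E A ↔ Disjoint A (bNbhdY E y) := by
  simp [bCommonNonNbhd]

lemma bContains_bCompl_of_le_card {s t : ℕ} {A : Finset (Fin m)} (hA : A.card = s)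
    (ht : t ≤ (bCommonNonNbhd E A).card) : bContains s t (bCompl E) := by
  obtain ⟨B, hB, hBcard⟩ := exists_subset_card_eq ht
  refine ⟨A, B, hA, hBcard, fun x hx y hy => ?_⟩
  have hdisj := mem_bCommonNonNbhd.mp (hB hy)
  simpa [bCompl] using disjoint_left.mp hdisj hx

lemma card_bNbhd_inter_le_one (hK : ¬ bContains 2 2 E) {x x' : Fin m} (hx : x ≠ x') :
    (bNbhd E x ∩ bNbhd E x').card ≤ 1 := by
  by_contra! h
  obtain ⟨B, hB, hBcard⟩ := exists_subset_card_eq h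
  refine hK ⟨{x, x'}, B, card_pair hx, hBcard, fun a ha y hy => ?_⟩
  have hy' := mem_inter.mp (hB hy)
  rcases mem_insert.mp ha with rfl | ha
  · exact mem_bNbhd.mp hy'.1
  · rw [mem_singleton.mp ha]; exact mem_bNbhd.mp hy'.2

lemma card_le_choose_two (hK : ¬ bContains 2 2 E) (A : Finset (Fin m)) (T : Finset (Fin n))
    (hT : ∀ y ∈ T, 2 ≤ (A ∩ bNbhdY E y).card) : T.card ≤ A.card.choose 2 := by
  choose! P hPsub hPcard using fun y hy => exists_subset_card_eq (hT y hy)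
  rw [← card_powersetCard]
  refine card_le_card_of_injOn P (fun y hy => ?_) (fun y hy y' hy' hPP => ?_)
  · exact mem_powersetCard.mpr ⟨(hPsub y hy).trans inter_subset_left, hPcard y hy⟩
  · by_contra hne
    refine hK ⟨P y, {y, y'}, hPcard y hy, card_pair hne, fun x hx z hz => ?_⟩
    rcases mem_insert.mp hz with rfl | hz
    · exact mem_bNbhdY.mp (mem_inter.mp (hPsub z hy hx)).2
    · rw [mem_singleton.mp hz]
      exact mem_bNbhdY.mp (mem_inter.mp (hPsub y' hy' (hPP ▸ hx))).2

lemma exists_card_bNbhdY_le_one (hK : ¬ bContains 2 2 E) (x₀ : Fin m)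
    (h : (m - 1).choose 2 < n - bDeg E x₀) :
    ∃ y, (x₀, y) ∉ E ∧ (bNbhdY E y).card ≤ 1 := by
  by_contra! hcon
  have hT : ∀ y ∈ univ \ bNbhd E x₀, 2 ≤ (univ.erase x₀ ∩ bNbhdY E y).card := by
    intro y hy
    have hx₀y : (x₀, y) ∉ E := by simpa using hy
    have hsub : bNbhdY E y ⊆ univ.erase x₀ := fun x hx =>
      mem_erase.mpr ⟨fun hxx₀ => hx₀y (hxx₀ ▸ mem_bNbhdY.mp hx), mem_univ x⟩
    rw [inter_eq_right.mpr hsub]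
    exact hcon y hx₀y
  have := card_le_choose_two hK _ _ hT
  rw [card_univ_sdiff, card_erase_of_mem (mem_univ x₀)] at this
  simp only [Fintype.card_fin, card_univ] at this
  rw [bDeg] at h
  omega

lemma card_filter_not_disjoint_le (hK : ¬ bContains 2 2 E) {x₀ : Fin m} {A : Finset (Fin m)}
    (hA : x₀ ∉ A) :
    ((bNbhd E x₀).filter (fun y => ¬ Disjoint A (bNbhdY E y))).card ≤ A.card := by
  calc _ ≤ (A.biUnion (fun x => bNbhd E x ∩ bNbhd E x₀)).card := by
        refine card_le_card (fun y hy => ?_)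
        obtain ⟨hy₀, hmeet⟩ := mem_filter.mp hy
        obtain ⟨x, hxA, hxy⟩ := not_disjoint_iff.mp hmeet
        exact mem_biUnion.mpr ⟨x, hxA, mem_inter.mpr ⟨mem_bNbhd.mpr (mem_bNbhdY.mp hxy), hy₀⟩⟩
    _ ≤ ∑ x ∈ A, (bNbhd E x ∩ bNbhd E x₀).card := card_biUnion_le
    _ ≤ ∑ _x ∈ A, 1 :=
        sum_le_sum fun x hx => card_bNbhd_inter_le_one hK (ne_of_mem_of_not_mem hx hA)
    _ = A.card := by simp

lemma le_card_bNbhd_inter_bCommonNonNbhd (hK : ¬ bContains 2 2 E) {x₀ : Fin m}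
    {A : Finset (Fin m)} (hA : x₀ ∉ A) :
    bDeg E x₀ - A.card ≤ (bNbhd E x₀ ∩ bCommonNonNbhd E A).card := by
  have hsplit := card_filter_add_card_filter_not
    (s := bNbhd E x₀) (fun y => Disjoint A (bNbhdY E y))
  have hinter : (bNbhd E x₀).filter (fun y => Disjoint A (bNbhdY E y)) =
      bNbhd E x₀ ∩ bCommonNonNbhd E A := by
    ext y; simp
  have := card_filter_not_disjoint_le hK hA
  rw [hinter] at hsplit
  rw [bDeg]
  omega

end

theorem stmt_11 (E : Finset (Fin 7 × Fin 30))
    (hK : ¬ bContains 2 2 E) (hΔ : bMaxDegX E = 9) :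
    bContains 5 5 (bCompl E) := by
  obtain ⟨x₀, -, hx₀⟩ := exists_mem_eq_sup univ univ_nonempty (bDeg E)
  rw [← bMaxDegX, hΔ] at hx₀
  obtain ⟨y₀, hy₀, hy₀deg⟩ := exists_card_bNbhdY_le_one hK x₀ (by rw [← hx₀]; decide)
  have hfree : 5 ≤ (univ.erase x₀ \ bNbhdY E y₀).card := by
    have := le_card_sdiff (bNbhdY E y₀) (univ.erase x₀)
    rw [card_erase_of_mem (mem_univ x₀), card_univ, Fintype.card_fin] at this
    omega
  obtain ⟨A, hAsub, hAcard⟩ := exists_subset_card_eq hfree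
  have hx₀A : x₀ ∉ A := fun h => by simpa using (mem_sdiff.mp (hAsub h)).1
  have hy₀A : y₀ ∈ bCommonNonNbhd E A :=
    mem_bCommonNonNbhd.mpr (disjoint_left.mpr fun x hx => (mem_sdiff.mp (hAsub hx)).2)
  have h4 := le_card_bNbhd_inter_bCommonNonNbhd hK hx₀A
  refine bContains_bCompl_of_le_card hAcard ?_
  calc 5 ≤ (insert y₀ (bNbhd E x₀ ∩ bCommonNonNbhd E A)).card := by
        rw [card_insert_of_notMem (fun h => hy₀ (mem_bNbhd.mp (mem_inter.mp h).1))]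
        omega
    _ ≤ _ := card_le_card (insert_subset hy₀A inter_subset_right)
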